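/- For the figure-eight knot representation ρ with g1 ↦ [[m,1],[0,m^{-1}]], g2 ↦ [[m,0],[y,m^{-1}]] satisfying (y-1)(m^2+m^{-2}) + y^2 - 3y + 3 = 0, the longitude λ = g2^{-1} g1 g3^{-1} g4 with g3 = g2 g1 g2^{-1} and g4 = g3^{-1} g2 g3 is mapped to an upper-triangular matrix whose (1,1) entry is l = −m^{-2}(y−3)(y−1)^2 − m^{-4}(y^2−3y+1), and moreover ρ(λ) commutes with ρ(g1). -/

import Mathlib

/-!
Write `a = ρ(g1)`, `b = ρ(g2)` and let `w = a⁻¹ b a b⁻¹` be Riley's word, with reversal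
`w̃ = b⁻¹ a b a⁻¹`; the longitude reduces to `w̃ w`. The Riley equation is exactly what makes
`w a = b w` (and `w̃ b = a w̃`), i.e. `ρ` respects the relation of the figure-eight group,
and then `w̃ w a = w̃ b w = a w̃ w`. Commuting with `a` already forces `w̃ w` to be upper
triangular.
-/

open Matrix

theorem Matrix.inv_fin_two_of_det_eq_one {R : Type*} [CommRing R] {a b c d : R}
    (h : a * d - b * c = 1) : (!![a, b; c, d])⁻¹ = !![d, -b; -c, a] := by
  rw [inv_def, det_fin_two_of, h, Ring.inverse_one, one_smul, adjugate_fin_two_of]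

theorem Matrix.fig8_longitude_eq {ι R : Type*} [Fintype ι] [DecidableEq ι] [CommRing R]
    (A B : Matrix ι ι R) (hB : IsUnit B.det) :
    B⁻¹ * A * (B * A * B⁻¹)⁻¹ * ((B * A * B⁻¹)⁻¹ * B * (B * A * B⁻¹)) =
      (B⁻¹ * A * B * A⁻¹) * (A⁻¹ * B * A * B⁻¹) := by
  simp only [Matrix.mul_inv_rev, nonsing_inv_nonsing_inv B hB, Matrix.mul_assoc,
    nonsing_inv_mul_cancel_left B _ hB]

namespace Fig8

variable {R : Type*} [CommRing R] {m n y : R}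

theorem inv_upper (hmn : m * n = 1) : (!![m, 1; 0, n])⁻¹ = !![n, -1; 0, m] := by
  rw [inv_fin_two_of_det_eq_one (by linear_combination hmn)]
  simp only [neg_zero]

theorem inv_lower (hmn : m * n = 1) : (!![m, 0; y, n])⁻¹ = !![n, 0; -y, m] := by
  rw [inv_fin_two_of_det_eq_one (by linear_combination hmn)]
  simp only [neg_zero]

theorem apply_one_zero_eq_zero_of_commute {X : Matrix (Fin 2) (Fin 2) R}
    (h : Commute X !![m, 1; 0, n]) : X 1 0 = 0 := by
  have h₀₀ := congrFun₂ h 0 0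
  simp only [mul_apply, Fin.sum_univ_two, of_apply, cons_val', cons_val_zero, cons_val_one,
    cons_val_fin_one, Fin.isValue] at h₀₀
  linear_combination -h₀₀

theorem semiconjBy_upper_lower {V : Matrix (Fin 2) (Fin 2) R}
    (h₀ : V 0 0 = (m - n) * V 0 1) (h₁ : V 1 0 = y * V 0 1) :
    SemiconjBy V !![m, 1; 0, n] !![m, 0; y, n] := by
  ext i j
  fin_cases i <;> fin_cases j <;>
    simp only [mul_apply, Fin.sum_univ_two, of_apply, cons_val', cons_val_zero, cons_val_one,
      cons_val_fin_one, Fin.zero_eta, Fin.mk_one, Fin.isValue]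
  · ring
  · linear_combination h₀
  · linear_combination (m - n) * h₁ - y * h₀
  · linear_combination h₁

theorem semiconjBy_lower_upper {U : Matrix (Fin 2) (Fin 2) R}
    (h₀ : U 1 0 = y * U 0 1) (h₁ : U 1 1 = (n - m) * U 0 1) :
    SemiconjBy U !![m, 0; y, n] !![m, 1; 0, n] := by
  ext i j
  fin_cases i <;> fin_cases j <;>
    simp only [mul_apply, Fin.sum_univ_two, of_apply, cons_val', cons_val_zero, cons_val_one,
      cons_val_fin_one, Fin.zero_eta, Fin.mk_one, Fin.isValue]
  · linear_combination -h₀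
  · linear_combination -h₁
  · linear_combination (m - n) * h₀ + y * h₁
  · ring

variable (m n y) in
/-- `ρ(g1⁻¹ g2 g1 g2⁻¹)` when `m * n = 1`. -/
def rileyWord : Matrix (Fin 2) (Fin 2) R :=
  !![n, -1; 0, m] * !![m, 0; y, n] * !![m, 1; 0, n] * !![n, 0; -y, m]

variable (m n y) in
/-- `ρ(g2⁻¹ g1 g2 g1⁻¹)` when `m * n = 1`: the reversal of `rileyWord`. -/
def rileyWordRev : Matrix (Fin 2) (Fin 2) R :=
  !![n, 0; -y, m] * !![m, 1; 0, n] * !![m, 0; y, n] * !![n, -1; 0, m]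

theorem rileyWord_eq (hmn : m * n = 1) :
    rileyWord m n y = !![(1 - y) ^ 2 + y * n ^ 2, (1 - y) * m - n;
      y * ((1 - y) * m - n), y * m ^ 2 + 1] := by
  ext i j
  fin_cases i <;> fin_cases j <;>
    simp only [rileyWord, mul_apply, Fin.sum_univ_two, of_apply, cons_val', cons_val_zero,
      cons_val_one, cons_val_fin_one, Fin.zero_eta, Fin.mk_one, Fin.isValue]
  · linear_combination (m * n + 1 - 2 * y) * hmn
  · linear_combination (m - n) * hmn
  · linear_combination y * (m - n) * hmn
  · linear_combination (m * n + 1) * hmn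

theorem rileyWordRev_eq (hmn : m * n = 1) :
    rileyWordRev m n y = !![1 + y * n ^ 2, n - m - y * n;
      y * (n - m - y * n), y * m ^ 2 + (1 - y) ^ 2] := by
  ext i j
  fin_cases i <;> fin_cases j <;>
    simp only [rileyWordRev, mul_apply, Fin.sum_univ_two, of_apply, cons_val', cons_val_zero,
      cons_val_one, cons_val_fin_one, Fin.zero_eta, Fin.mk_one, Fin.isValue]
  · linear_combination (m * n + 1) * hmn
  · linear_combination (n - m) * hmn
  · linear_combination y * (n - m) * hmn
  · linear_combination (m * n + 1 - 2 * y) * hmn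

variable (hmn : m * n = 1) (hf : (y - 1) * (m ^ 2 + n ^ 2) + y ^ 2 - 3 * y + 3 = 0)
include hmn hf

theorem semiconjBy_rileyWord : SemiconjBy (rileyWord m n y) !![m, 1; 0, n] !![m, 0; y, n] := by
  rw [rileyWord_eq hmn]
  refine semiconjBy_upper_lower ?_ (by simp)
  simp only [of_apply, cons_val', cons_val_zero, cons_val_one, cons_val_fin_one]
  linear_combination hf + (2 - y) * hmn

theorem semiconjBy_rileyWordRev :
    SemiconjBy (rileyWordRev m n y) !![m, 0; y, n] !![m, 1; 0, n] := by
  rw [rileyWordRev_eq hmn]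
  refine semiconjBy_lower_upper (by simp) ?_
  simp only [of_apply, cons_val', cons_val_zero, cons_val_one, cons_val_fin_one]
  linear_combination hf + (2 - y) * hmn

theorem commute_longitude : Commute (rileyWordRev m n y * rileyWord m n y) !![m, 1; 0, n] :=
  (semiconjBy_rileyWordRev hmn hf).mul_left (semiconjBy_rileyWord hmn hf)

theorem longitude_apply_zero_zero :
    (rileyWordRev m n y * rileyWord m n y) 0 0 =
      -n ^ 2 * (y - 3) * (y - 1) ^ 2 - n ^ 4 * (y ^ 2 - 3 * y + 1) := by
  rw [rileyWordRev_eq hmn, rileyWord_eq hmn]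
  simp only [mul_apply, Fin.sum_univ_two, of_apply, cons_val', cons_val_zero, cons_val_one,
    cons_val_fin_one]
  linear_combination (y + (2 * y - 1) * n ^ 2) * hf +
    (y * (y ^ 2 - 2 * y + 2) - (2 * y - 1) * (y - 1) * (m * n + 1)) * hmn

end Fig8

open Fig8 in
theorem fig8_longitude_matrix_general
    (y m : ℂ) (hm : m ≠ 0)
    (hf : (y - 1) * (m ^ 2 + m⁻¹ ^ 2) + y ^ 2 - 3 * y + 3 = 0)
    (A B : Matrix (Fin 2) (Fin 2) ℂ)
    (hA : A = !![m, 1; 0, m⁻¹]) (hB : B = !![m, 0; y, m⁻¹])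
    (C D L : Matrix (Fin 2) (Fin 2) ℂ)
    (hC : C = B * A * B⁻¹) (hD : D = C⁻¹ * B * C)
    (hL : L = B⁻¹ * A * C⁻¹ * D) :
    L 1 0 = 0 ∧
      L 0 0 = -m⁻¹ ^ 2 * (y - 3) * (y - 1) ^ 2 - m⁻¹ ^ 4 * (y ^ 2 - 3 * y + 1) ∧
      L * A = A * L := by
  have hmn : m * m⁻¹ = 1 := mul_inv_cancel₀ hm
  have hBdet : IsUnit B.det := by simp [hB, det_fin_two_of, hmn]
  have hL' : L = rileyWordRev m m⁻¹ y * rileyWord m m⁻¹ y := by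
    rw [hL, hD, hC, fig8_longitude_eq A B hBdet, hA, hB, inv_upper hmn, inv_lower hmn]
    rfl
  subst hL' hA
  have hcomm := commute_longitude hmn hf
  exact ⟨apply_one_zero_eq_zero_of_commute hcomm, longitude_apply_zero_zero hmn hf, hcomm⟩

theorem fig8_longitude_matrix
    (y m : ℂ) (hy : y ≠ 0) (hm : m ≠ 0)
    (hf : (y - 1) * (m ^ 2 + m⁻¹ ^ 2) + y ^ 2 - 3 * y + 3 = 0)
    (A B : Matrix (Fin 2) (Fin 2) ℂ)
    (hA : A = !![m, 1; 0, m⁻¹]) (hB : B = !![m, 0; y, m⁻¹])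
    (C D L : Matrix (Fin 2) (Fin 2) ℂ)
    (hC : C = B * A * B⁻¹) (hD : D = C⁻¹ * B * C)
    (hL : L = B⁻¹ * A * C⁻¹ * D) :
    L 1 0 = 0 ∧
      L 0 0 = -m⁻¹ ^ 2 * (y - 3) * (y - 1) ^ 2 - m⁻¹ ^ 4 * (y ^ 2 - 3 * y + 1) ∧
      L * A = A * L :=
  fig8_longitude_matrix_general y m hm hf A B hA hB C D L hC hD hL
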